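/- Backtracking preserves the invariant that all states in the visited list are causally consistent except possibly a suffix: if the visited list satisfies the invariant and the make_consistent procedure either appends states (with only the final appended state guaranteed in S_C) or pops the last element, then after make_consistent returns with a state in S_C, the invariant still holds and the returned state is causally consistent. -/
import Mathlib


/-- The invariant: all states of the list outside `S_C` form a (contiguous) final segment,
i.e. any element preceding an element of `S_C` is itself in `S_C`. -/
def ListInv {α : Type*} (S_C : Set α) (L : List α) : Prop :=
  ∀ (i j : ℕ) (hi : i < L.length) (hj : j < L.length), i ≤ j →
    L.get ⟨j, hj⟩ ∈ S_C → L.get ⟨i, hi⟩ ∈ S_C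

/-- The `make_consistent` procedure, as a big-step relation on (visited list, current state)
configurations: while the current state is inconsistent, either apply an action (appending
the current state) or pop the last element; terminate when the current state lies in `S_C`. -/
inductive MakeConsistent {α : Type*} (S_C : Set α) (A : Set (α → α)) :
    List α × α → List α × α → Prop
  | done {L : List α} {s : α} : s ∈ S_C → MakeConsistent S_C A (L, s) (L, s)
  | push {L : List α} {s : α} {a : α → α} {r : List α × α} : s ∉ S_C → a ∈ A →
      MakeConsistent S_C A (L ++ [s], a s) r → MakeConsistent S_C A (L, s) r
  | pop {L : List α} {x s : α} {r : List α × α} : s ∉ S_C →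
      MakeConsistent S_C A (L, x) r → MakeConsistent S_C A (L ++ [x], s) r

lemma ListInv.push {α : Type*} {S_C : Set α} {L : List α} {s : α}
    (hInv : ListInv S_C L) (hs : s ∉ S_C) : ListInv S_C (L ++ [s]) := by
  intro i j hi hj hij hjC
  have hlen : (L ++ [s]).length = L.length + 1 := by simp
  have hj' : j < L.length := by
    rcases Nat.lt_succ_iff_lt_or_eq.mp (hlen ▸ hj) with h | h
    · exact h
    · exfalso
      apply hs
      have : (L ++ [s]).get ⟨j, hj⟩ = s := by
        subst h
        simp [List.get_eq_getElem, List.getElem_append_right]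
      rwa [this] at hjC
  have hi' : i < L.length := lt_of_le_of_lt hij hj'
  have hgj : (L ++ [s]).get ⟨j, hj⟩ = L.get ⟨j, hj'⟩ := by
    simp [List.get_eq_getElem, List.getElem_append_left, hj']
  have hgi : (L ++ [s]).get ⟨i, hi⟩ = L.get ⟨i, hi'⟩ := by
    simp [List.get_eq_getElem, List.getElem_append_left, hi']
  rw [hgi]
  exact hInv i j hi' hj' hij (hgj ▸ hjC)

lemma ListInv.pop {α : Type*} {S_C : Set α} {L : List α} {x : α}
    (hInv : ListInv S_C (L ++ [x])) : ListInv S_C L := by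
  intro i j hi hj hij hjC
  have hi2 : i < (L ++ [x]).length := by simp; omega
  have hj2 : j < (L ++ [x]).length := by simp; omega
  have hgj : (L ++ [x]).get ⟨j, hj2⟩ = L.get ⟨j, hj⟩ := by
    simp [List.get_eq_getElem, List.getElem_append_left, hj]
  have hgi : (L ++ [x]).get ⟨i, hi2⟩ = L.get ⟨i, hi⟩ := by
    simp [List.get_eq_getElem, List.getElem_append_left, hi]
  rw [← hgi]
  exact hInv i j hi2 hj2 hij (hgj ▸ hjC)

theorem stmt_18 {α : Type*} (S_C : Set α) (A : Set (α → α))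
    (L L' : List α) (s s' : α)
    (h : MakeConsistent S_C A (L, s) (L', s'))
    (hInv : ListInv S_C L) :
    ListInv S_C L' ∧ s' ∈ S_C := aux h hInv
where
  aux {p q : List α × α} (h : MakeConsistent S_C A p q) (hInv : ListInv S_C p.1) :
      ListInv S_C q.1 ∧ q.2 ∈ S_C := by
    induction h with
    | done hs => exact ⟨hInv, hs⟩
    | push hs _ _ ih => exact ih (ListInv.push hInv hs)
    | pop hs _ ih => exact ih (ListInv.pop hInv)
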